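/- (Bounded forward solution of a stable linear recursion) Let A be a real v×v matrix all of whose (complex) eigenvalues have modulus < 1, let B be a real v×p matrix, and let w : ℤ → ℝ^p be a bounded sequence. Then for every k ∈ ℤ the series x(k) := Σ_{i=−∞}^{k} A^{k−i} B w(i−1) converges absolutely, the sequence x is bounded, and x satisfies the forward recursion x(k) = A x(k−1) + B w(k−1) for all k ∈ ℤ. -/

import Mathlib

/-
Gelfand's formula `‖Aⁿ‖^(1/n) → ρ(A)` applied to the complexification of `A`, whose spectral
radius is `< 1`, gives `‖Aⁿ‖ ≤ rⁿ` eventually for some `r < 1`; complexification does not change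
the `ℓ∞` operator norm of a real matrix, so `∑ ‖Aⁿ‖ < ∞`. Against the bounded input this dominates
the series defining `x(k)` termwise, which gives absolute convergence and the uniform bound
`(∑ ‖Aⁿ‖) ‖B‖ sup ‖w‖`. The recursion comes from splitting off the `j = 0` term and pulling `A` out
of the remaining series.
-/

noncomputable section

/-- All complex eigenvalues of the real matrix have modulus < 1. -/
def SpecLtOne {v : ℕ} (M : Matrix (Fin v) (Fin v) ℝ) : Prop :=
  ∀ z ∈ spectrum ℂ (M.map (algebraMap ℝ ℂ)), ‖z‖ < 1

/-- The candidate bounded forward solution `x(k) = Σ_{i=−∞}^{k} A^{k−i} B w(i−1)`,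
reindexed by `j = k − i`. -/
noncomputable def fwdSol {v p : ℕ} (A : Matrix (Fin v) (Fin v) ℝ)
    (B : Matrix (Fin v) (Fin p) ℝ) (w : ℤ → Fin p → ℝ) (k : ℤ) : Fin v → ℝ :=
  ∑' j : ℕ, (A ^ j).mulVec (B.mulVec (w (k - (j : ℤ) - 1)))

open Filter Matrix

theorem spectrum.summable_norm_pow_of_spectralRadius_lt_one {A : Type*} [NormedRing A]
    [NormedAlgebra ℂ A] [CompleteSpace A] {a : A} (ha : spectralRadius ℂ a < 1) :
    Summable fun n : ℕ => ‖a ^ n‖ := by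
  obtain ⟨r, hρr, hr⟩ := ENNReal.lt_iff_exists_nnreal_btwn.mp ha
  have hr1 : (r : ℝ) < 1 := by exact_mod_cast hr
  refine (summable_geometric_of_lt_one r.2 hr1).of_norm_bounded_eventually_nat ?_
  have hroot : ∀ᶠ n : ℕ in atTop, ENNReal.ofReal (‖a ^ n‖ ^ (1 / n : ℝ)) < r :=
    (pow_norm_pow_one_div_tendsto_nhds_spectralRadius a).eventually_lt_const hρr
  filter_upwards [hroot, eventually_gt_atTop 0] with n hn hn0
  rw [← ENNReal.ofReal_coe_nnreal, ENNReal.ofReal_lt_ofReal_iff_of_nonneg (by positivity),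
    one_div] at hn
  have hpow := (Real.rpow_inv_lt_iff_of_pos (norm_nonneg (a ^ n)) r.2 (Nat.cast_pos.mpr hn0)).mp hn
  rw [Real.rpow_natCast] at hpow
  exact (norm_norm _).trans_le hpow.le

theorem spectrum.spectralRadius_lt_one_of_forall_norm_lt_one {A : Type*} [NormedRing A]
    [NormedAlgebra ℂ A] [CompleteSpace A] {a : A} (ha : ∀ z ∈ spectrum ℂ a, ‖z‖ < 1) :
    spectralRadius ℂ a < 1 := by
  rcases (spectrum ℂ a).eq_empty_or_nonempty with h | h
  · simp [spectralRadius, h]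
  · exact_mod_cast spectrum.spectralRadius_lt_of_forall_lt_of_nonempty h
      (r := 1) fun z hz => by exact_mod_cast ha z hz

theorem HasSum.matrix_mulVec {ι m n R : Type*} [Fintype n] [CommSemiring R] [TopologicalSpace R]
    [IsTopologicalSemiring R] (M : Matrix m n R) {f : ι → n → R} {a : n → R} (hf : HasSum f a) :
    HasSum (fun i => M *ᵥ f i) (M *ᵥ a) :=
  hf.map (mulVecLin M) (continuous_const.matrix_mulVec continuous_id)

section LinftyOpNorm

attribute [local instance] Matrix.linftyOpNormedAddCommGroup Matrix.linftyOpNormedRing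
  Matrix.linftyOpNormedAlgebra

theorem Matrix.linfty_opNorm_map_algebraMap_complex {m n : Type*} [Fintype m] [Fintype n]
    (X : Matrix m n ℝ) : ‖X.map (algebraMap ℝ ℂ)‖ = ‖X‖ := by
  simp [linfty_opNorm_def]

theorem SpecLtOne.summable_norm_pow {v : ℕ} {A : Matrix (Fin v) (Fin v) ℝ} (hA : SpecLtOne A) :
    Summable fun n : ℕ => ‖A ^ n‖ := by
  simpa only [← Matrix.map_pow, Matrix.linfty_opNorm_map_algebraMap_complex] using
    spectrum.summable_norm_pow_of_spectralRadius_lt_one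
      (spectrum.spectralRadius_lt_one_of_forall_norm_lt_one hA)

variable {v p : ℕ} {A : Matrix (Fin v) (Fin v) ℝ} (B : Matrix (Fin v) (Fin p) ℝ)
  {w : ℤ → Fin p → ℝ} {C : ℝ}

theorem norm_fwdSol_term_le (hC : ∀ k, ‖w k‖ ≤ C) (k : ℤ) (j : ℕ) :
    ‖(A ^ j) *ᵥ (B *ᵥ w (k - j - 1))‖ ≤ ‖A ^ j‖ * ‖B‖ * C :=
  calc ‖(A ^ j) *ᵥ (B *ᵥ w (k - j - 1))‖
      ≤ ‖A ^ j‖ * (‖B‖ * ‖w (k - j - 1)‖) := by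
        grw [linfty_opNorm_mulVec, linfty_opNorm_mulVec]
    _ ≤ ‖A ^ j‖ * ‖B‖ * C := by grw [hC, mul_assoc]

theorem SpecLtOne.summable_norm_fwdSol_term (hA : SpecLtOne A) (hC : ∀ k, ‖w k‖ ≤ C) (k : ℤ) :
    Summable fun j : ℕ => ‖(A ^ j) *ᵥ (B *ᵥ w (k - j - 1))‖ :=
  .of_nonneg_of_le (fun _ => norm_nonneg _) (norm_fwdSol_term_le B hC k)
    (hA.summable_norm_pow.mul_right _ |>.mul_right _)

theorem SpecLtOne.exists_norm_fwdSol_le (hA : SpecLtOne A) (hC : ∀ k, ‖w k‖ ≤ C) :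
    ∃ D : ℝ, ∀ k, ‖fwdSol A B w k‖ ≤ D := by
  refine ⟨(∑' j, ‖A ^ j‖) * ‖B‖ * C, fun k => ?_⟩
  calc ‖fwdSol A B w k‖ ≤ ∑' j : ℕ, ‖(A ^ j) *ᵥ (B *ᵥ w (k - j - 1))‖ :=
        norm_tsum_le_tsum_norm (hA.summable_norm_fwdSol_term B hC k)
    _ ≤ ∑' j : ℕ, ‖A ^ j‖ * ‖B‖ * C :=
        (hA.summable_norm_fwdSol_term B hC k).tsum_le_tsum (norm_fwdSol_term_le B hC k)
          (hA.summable_norm_pow.mul_right _ |>.mul_right _)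
    _ = (∑' j, ‖A ^ j‖) * ‖B‖ * C := by rw [tsum_mul_right, tsum_mul_right]

end LinftyOpNorm

theorem fwdSol_eq_mulVec_add {v p : ℕ} {A : Matrix (Fin v) (Fin v) ℝ}
    {B : Matrix (Fin v) (Fin p) ℝ} {w : ℤ → Fin p → ℝ} {k : ℤ}
    (hs : Summable fun j : ℕ => (A ^ j) *ᵥ (B *ᵥ w (k - 1 - j - 1))) :
    fwdSol A B w k = A *ᵥ fwdSol A B w (k - 1) + B *ᵥ w (k - 1) := by
  have hshift : ∀ j : ℕ, (A ^ (j + 1)) *ᵥ (B *ᵥ w (k - ↑(j + 1) - 1)) =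
      A *ᵥ ((A ^ j) *ᵥ (B *ᵥ w (k - 1 - j - 1))) := by
    intro j
    rw [pow_succ', ← mulVec_mulVec, Nat.cast_succ, sub_add_eq_sub_sub_swap]
  have hshifted : HasSum (fun j : ℕ => (A ^ (j + 1)) *ᵥ (B *ᵥ w (k - ↑(j + 1) - 1)))
      (A *ᵥ fwdSol A B w (k - 1)) := by
    rw [fwdSol]
    simpa only [hshift] using hs.hasSum.matrix_mulVec A
  rw [fwdSol, hshifted.zero_add.tsum_eq]
  simp [add_comm]

/-- **Bounded forward solution of a stable linear recursion.**
If all eigenvalues of `A` have modulus < 1 and `w` is bounded, then for every `k` the series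
defining `x(k)` converges absolutely, `x` is bounded, and `x(k) = A x(k−1) + B w(k−1)`. -/
theorem bounded_forward_solution {v p : ℕ}
    (A : Matrix (Fin v) (Fin v) ℝ) (hA : SpecLtOne A)
    (B : Matrix (Fin v) (Fin p) ℝ) (w : ℤ → Fin p → ℝ)
    (hw : ∃ C : ℝ, ∀ k : ℤ, ‖w k‖ ≤ C) :
    (∀ k : ℤ, Summable fun j : ℕ => ‖(A ^ j).mulVec (B.mulVec (w (k - (j : ℤ) - 1)))‖) ∧
    (∃ C : ℝ, ∀ k : ℤ, ‖fwdSol A B w k‖ ≤ C) ∧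
    (∀ k : ℤ, fwdSol A B w k = A.mulVec (fwdSol A B w (k - 1)) + B.mulVec (w (k - 1))) := by
  obtain ⟨C, hC⟩ := hw
  have hsum := hA.summable_norm_fwdSol_term B hC
  exact ⟨hsum, hA.exists_norm_fwdSol_le B hC, fun k => fwdSol_eq_mulVec_add (hsum (k - 1)).of_norm⟩
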